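/- The weighted totient sum satisfies \(\sum_{j=1}^n j^2\cdot\phi(j) = \frac{3n^4}{2\pi^2} + O(n^3 \log n)\). -/

import Mathlib

/-!
Since `φ = μ ∗ id`, we have `j² φ(j) = ∑_{dm = j} μ(d) d² m³`, so that
`∑_{j ≤ n} j² φ(j) = ∑_{d ≤ n} μ(d) d² ∑_{m ≤ n/d} m³`.
The inner sum is `(n/d)⁴/4 + O((n/d)³)`; the error terms add up to
`O(n³ ∑_{d ≤ n} 1/d) = O(n³ log n)`, and the main terms give `n⁴/4 · ∑_{d ≤ n} μ(d)/d²`.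
Finally `∑_{d ≤ n} μ(d)/d² = 1/ζ(2) + O(1/n) = 6/π² + O(1/n)`.
-/

open Finset Real
open ArithmeticFunction hiding log
open scoped ArithmeticFunction.Moebius

theorem Nat.cast_totient_eq_sum_moebius_mul {R : Type*} [Ring R] {n : ℕ} (hn : n ≠ 0) :
    (n.totient : R) = ∑ x ∈ n.divisorsAntidiagonal, (μ x.1 : R) * x.2 := by
  rw [← (sum_eq_iff_sum_smul_moebius_eq (f := fun i => (i.totient : R)) (g := (↑))).mp
    (fun m _ => by rw [← Nat.cast_sum, Nat.sum_totient]) n (Nat.pos_of_ne_zero hn)]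
  simp [zsmul_eq_mul]

theorem moebius_pmul_pow_two_mul_pow_three_apply {n : ℕ} (hn : n ≠ 0) :
    ((μ : ArithmeticFunction ℝ).pmul ↑(pow 2) * ↑(pow 3)) n = (n : ℝ) ^ 2 * n.totient := by
  rw [mul_apply, Nat.cast_totient_eq_sum_moebius_mul hn, mul_sum]
  refine sum_congr rfl fun x hx => ?_
  obtain ⟨rfl, -⟩ := Nat.mem_divisorsAntidiagonal.mp hx
  simp only [pmul_apply, intCoe_apply, natCoe_apply, pow_apply, OfNat.ofNat_ne_zero, false_and,
    ↓reduceIte, Nat.cast_pow, Nat.cast_mul]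
  ring

theorem sum_Icc_sq_mul_totient (N : ℕ) :
    ∑ j ∈ Icc 1 N, (j : ℝ) ^ 2 * j.totient
      = ∑ d ∈ Icc 1 N, (μ d : ℝ) * d ^ 2 * ∑ m ∈ Icc 1 (N / d), (m : ℝ) ^ 3 := by
  have h := sum_Ioc_mul_eq_sum_sum ((μ : ArithmeticFunction ℝ).pmul ↑(pow 2)) ↑(pow 3) N
  rw [sum_congr rfl fun j hj => moebius_pmul_pow_two_mul_pow_three_apply
    (mem_Ioc.mp hj).1.ne'] at h
  simp only [← Icc_add_one_left_eq_Ioc, zero_add] at h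
  convert h using 2
  simp [pmul_apply, pow_apply]

theorem sum_Icc_pow_three (k : ℕ) :
    ∑ m ∈ Icc 1 k, (m : ℝ) ^ 3 = (k : ℝ) ^ 2 * (k + 1) ^ 2 / 4 := by
  induction k with
  | zero => simp
  | succ k ih =>
    rw [sum_Icc_succ_top (by omega), ih]
    push_cast
    ring

theorem abs_sum_Icc_floor_pow_three_sub_le {x : ℝ} (hx : 0 ≤ x) :
    |∑ m ∈ Icc 1 ⌊x⌋₊, (m : ℝ) ^ 3 - x ^ 4 / 4| ≤ x ^ 3 := by
  rw [sum_Icc_pow_three, abs_le]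
  have hle : (⌊x⌋₊ : ℝ) ≤ x := Nat.floor_le hx
  have hlt : x < ⌊x⌋₊ + 1 := Nat.lt_floor_add_one x
  set k : ℝ := (⌊x⌋₊ : ℝ)
  rcases Nat.eq_zero_or_pos ⌊x⌋₊ with h0 | h1
  · have hk : k = 0 := by simp [k, h0]
    rw [hk] at hlt ⊢
    constructor <;> nlinarith [pow_nonneg hx 3]
  · have hk : (1 : ℝ) ≤ k := Nat.one_le_cast.mpr h1
    have hx1 : 1 ≤ x := hk.trans hle
    have lower : ((x - 1) * x) ^ 2 ≤ (k * (k + 1)) ^ 2 :=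
      pow_le_pow_left₀ (by nlinarith) (by nlinarith) 2
    have upper : (k * (k + 1)) ^ 2 ≤ (x * (x + 1)) ^ 2 :=
      pow_le_pow_left₀ (by positivity) (by nlinarith) 2
    constructor <;> nlinarith [pow_nonneg hx 3]

theorem sum_Icc_inv_le_one_add_log (n : ℕ) : ∑ d ∈ Icc 1 n, (d : ℝ)⁻¹ ≤ 1 + log n := by
  simpa [harmonic_eq_sum_Icc] using harmonic_le_one_add_log n

theorem abs_moebius_mul_sq_mul_sum_pow_three_sub_le (n : ℕ) {d : ℕ} (hd : d ≠ 0) :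
    |(μ d : ℝ) * d ^ 2 * ∑ m ∈ Icc 1 (n / d), (m : ℝ) ^ 3 - (n : ℝ) ^ 4 / 4 * ((μ d : ℝ) / d ^ 2)|
      ≤ (n : ℝ) ^ 3 * (d : ℝ)⁻¹ := by
  have hx : (0 : ℝ) ≤ n / d := by positivity
  calc _ = |(μ d : ℝ) * d ^ 2 *
          (∑ m ∈ Icc 1 ⌊(n : ℝ) / d⌋₊, (m : ℝ) ^ 3 - ((n : ℝ) / d) ^ 4 / 4)| := by
        rw [Nat.floor_div_eq_div]
        congr 1
        field_simp
    _ ≤ 1 * d ^ 2 * ((n : ℝ) / d) ^ 3 := by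
        rw [abs_mul, abs_mul, abs_pow, Nat.abs_cast]
        gcongr
        · exact_mod_cast abs_moebius_le_one
        · exact abs_sum_Icc_floor_pow_three_sub_le hx
    _ = (n : ℝ) ^ 3 * (d : ℝ)⁻¹ := by field_simp

theorem abs_sum_Icc_sq_mul_totient_sub_le (n : ℕ) :
    |∑ j ∈ Icc 1 n, (j : ℝ) ^ 2 * j.totient - (n : ℝ) ^ 4 / 4 * ∑ d ∈ Icc 1 n, (μ d : ℝ) / d ^ 2|
      ≤ (n : ℝ) ^ 3 * (1 + log n) := by
  rw [sum_Icc_sq_mul_totient, mul_sum, ← sum_sub_distrib]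
  calc _ ≤ ∑ d ∈ Icc 1 n, (n : ℝ) ^ 3 * (d : ℝ)⁻¹ :=
        (abs_sum_le_sum_abs _ _).trans <| sum_le_sum fun d hd =>
          abs_moebius_mul_sq_mul_sum_pow_three_sub_le n (by grind)
    _ ≤ (n : ℝ) ^ 3 * (1 + log n) := by
        rw [← mul_sum]
        gcongr
        exact sum_Icc_inv_le_one_add_log n

theorem abs_moebius_div_sq_le (d : ℕ) : |(μ d : ℝ) / d ^ 2| ≤ ((d : ℝ) ^ 2)⁻¹ := by
  rw [abs_div, abs_of_nonneg (by positivity : (0 : ℝ) ≤ (d : ℝ) ^ 2), div_eq_mul_inv]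
  exact mul_le_of_le_one_left (by positivity) (by exact_mod_cast abs_moebius_le_one)

theorem hasSum_moebius_div_sq : HasSum (fun d : ℕ => (μ d : ℝ) / d ^ 2) (6 / π ^ 2) := by
  have h2 : 1 < (2 : ℂ).re := by norm_num
  have hL : LSeries (fun n => (μ n : ℂ)) 2 = 6 / (π : ℂ) ^ 2 := by
    have := LSeries_zeta_mul_Lseries_moebius h2
    rw [LSeries_zeta_eq_riemannZeta h2, riemannZeta_two] at this
    field_simp at this ⊢
    linear_combination this
  have h := (LSeriesSummable_moebius_iff.mpr h2).LSeriesHasSum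
  rw [hL, LSeriesHasSum] at h
  rw [← Complex.hasSum_ofReal]
  convert h using 1
  · ext d
    rcases eq_or_ne d 0 with rfl | hd
    · simp
    · rw [LSeries.term_of_ne_zero hd, Complex.cpow_ofNat]
      push_cast
      ring
  · push_cast
    ring

theorem tsum_inv_sq_nat_add_le {n : ℕ} (hn : n ≠ 0) :
    ∑' i : ℕ, (((i + (n + 1) : ℕ) : ℝ) ^ 2)⁻¹ ≤ (n : ℝ)⁻¹ := by
  refine Real.tsum_le_of_sum_range_le (fun _ => by positivity) fun N => ?_
  calc ∑ i ∈ range N, (((i + (n + 1) : ℕ) : ℝ) ^ 2)⁻¹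
      = ∑ k ∈ Ioc n (N + n), ((k : ℝ) ^ 2)⁻¹ := by
        rw [range_eq_Ico, sum_Ico_add' (fun k : ℕ => ((k : ℝ) ^ 2)⁻¹), zero_add, ← add_assoc,
          Ico_add_one_add_one_eq_Ioc]
    _ ≤ (n : ℝ)⁻¹ - ((N + n : ℕ) : ℝ)⁻¹ := sum_Ioc_inv_sq_le_sub hn (by omega)
    _ ≤ (n : ℝ)⁻¹ := sub_le_self _ (by positivity)

theorem abs_sum_Icc_sub_of_hasSum_le {f : ℕ → ℝ} {a : ℝ} (hfa : HasSum f a)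
    (hf : ∀ k, |f k| ≤ ((k : ℝ) ^ 2)⁻¹) {n : ℕ} (hn : n ≠ 0) :
    |∑ k ∈ Icc 1 n, f k - a| ≤ (n : ℝ)⁻¹ := by
  -- `hf 0` forces `f 0 = 0`, because `(0 : ℝ)⁻¹ = 0`.
  have hf0 : f 0 = 0 := abs_nonpos_iff.mp (by simpa using hf 0)
  have hsplit := hfa.summable.sum_add_tsum_nat_add (n + 1)
  rw [hfa.tsum_eq, sum_range_eq_add_Ico _ (by omega), hf0, zero_add,
    Ico_add_one_right_eq_Icc] at hsplit
  rw [← hsplit, sub_add_cancel_left, abs_neg]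
  have hg : Summable fun i : ℕ => (((i + (n + 1) : ℕ) : ℝ) ^ 2)⁻¹ :=
    (summable_nat_add_iff (f := fun k : ℕ => ((k : ℝ) ^ 2)⁻¹) (n + 1)).mpr
      (Real.summable_nat_pow_inv.mpr one_lt_two)
  exact (tsum_of_norm_bounded (f := fun i => f (i + (n + 1))) hg.hasSum fun i => hf _).trans
    (tsum_inv_sq_nat_add_le hn)

theorem abs_sum_Icc_moebius_div_sq_sub_le {n : ℕ} (hn : n ≠ 0) :
    |∑ d ∈ Icc 1 n, (μ d : ℝ) / d ^ 2 - 6 / π ^ 2| ≤ (n : ℝ)⁻¹ :=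
  abs_sum_Icc_sub_of_hasSum_le hasSum_moebius_div_sq abs_moebius_div_sq_le hn

theorem sq_weighted_totient_sum_asymptotic :
    ∃ C : ℝ, 0 < C ∧ ∀ n : ℕ, 2 ≤ n →
      |(∑ j ∈ Finset.Icc 1 n, (j : ℝ) ^ 2 * (Nat.totient j : ℝ)) - 3 * (n : ℝ) ^ 4 / (2 * Real.pi ^ 2)|
        ≤ C * (n : ℝ) ^ 3 * Real.log n := by
  refine ⟨4, by norm_num, fun n hn => ?_⟩
  have hn0 : 0 < (n : ℝ) := by positivity
  have hlog : 1 / 2 ≤ log n := calc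
    (1 / 2 : ℝ) ≤ log 2 := by linarith [log_two_gt_d9]
    _ ≤ log n := log_le_log two_pos (by exact_mod_cast hn)
  have hmain : |(n : ℝ) ^ 4 / 4 * ∑ d ∈ Icc 1 n, (μ d : ℝ) / d ^ 2 - 3 * (n : ℝ) ^ 4 / (2 * π ^ 2)|
      ≤ (n : ℝ) ^ 3 / 4 := calc
    _ = (n : ℝ) ^ 4 / 4 * |∑ d ∈ Icc 1 n, (μ d : ℝ) / d ^ 2 - 6 / π ^ 2| := by
      rw [show 3 * (n : ℝ) ^ 4 / (2 * π ^ 2) = (n : ℝ) ^ 4 / 4 * (6 / π ^ 2) by ring, ← mul_sub,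
        abs_mul, abs_of_nonneg (by positivity)]
    _ ≤ (n : ℝ) ^ 4 / 4 * (n : ℝ)⁻¹ := by
      gcongr
      exact abs_sum_Icc_moebius_div_sq_sub_le (by omega)
    _ = (n : ℝ) ^ 3 / 4 := by field_simp
  calc _ ≤ (n : ℝ) ^ 3 * (1 + log n) + (n : ℝ) ^ 3 / 4 :=
        (abs_sub_le _ _ _).trans (add_le_add (abs_sum_Icc_sq_mul_totient_sub_le n) hmain)
    _ ≤ 4 * (n : ℝ) ^ 3 * log n := by nlinarith [pow_pos hn0 3]
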